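/- arXiv:2202.00075 — 5 statements merged into one kernel-verified Lean document; each statement's English description precedes it below -/
import Mathlib

section
/- Let β ≥ 0, α ≥ 0, ρ ≥ 0, and let σ : ℝ → ℝ satisfy |σ(x) − σ(y)| ≤ ρ|x − y| for all x, y. Let A, A' be n×n real matrices, X, X' n×d real matrices, and W a d×d real matrix such that ‖A'‖ ≤ β, ‖X‖ ≤ β, ‖W‖ ≤ β, and ‖X' − X‖ ≤ α·ε where ε = ‖A' − A‖. Then applying σ entrywise, ‖σ(A'·X'·W) − σ(A·X·W)‖ ≤ ρ·(1 + α)·n·d·β²·ε. -/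
attribute [local instance] Matrix.normedAddCommGroup

/-!
Subtracting and adding `A' * X * W` splits the error of the product as
`A' * (X' - X) * W + (A' - A) * X * W`. In the entrywise sup norm a product of an `a × b` and a
`b × c` matrix has norm at most `b` times the product of the norms, so the two terms are at most
`n d β² α ε` and `n d β² ε`; the Lipschitz activation multiplies the total by `ρ`.
-/

namespace Matrix

variable {l m n o α : Type*} [Fintype l] [Fintype m] [Fintype n] [Fintype o]
  [NonUnitalNormedRing α]

theorem norm_mul_le_card_mul (M : Matrix l m α) (N : Matrix m n α) :
    ‖M * N‖ ≤ Fintype.card m * ‖M‖ * ‖N‖ := by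
  refine (norm_le_iff (by positivity)).2 fun i j => ?_
  calc ‖(M * N) i j‖ = ‖∑ k, M i k * N k j‖ := rfl
    _ ≤ ∑ k, ‖M i k‖ * ‖N k j‖ := norm_sum_le_of_le _ fun k _ => norm_mul_le _ _
    _ ≤ ∑ _k : m, ‖M‖ * ‖N‖ := by
        gcongr <;> exact norm_entry_le_entrywise_sup_norm _
    _ = Fintype.card m * ‖M‖ * ‖N‖ := by simp [mul_assoc]

theorem norm_mul_mul_le_card_mul (M : Matrix l m α) (N : Matrix m n α) (P : Matrix n o α) :
    ‖M * N * P‖ ≤ Fintype.card m * Fintype.card n * ‖M‖ * ‖N‖ * ‖P‖ :=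
  calc ‖M * N * P‖ ≤ Fintype.card n * ‖M * N‖ * ‖P‖ := norm_mul_le_card_mul _ _
    _ ≤ Fintype.card n * (Fintype.card m * ‖M‖ * ‖N‖) * ‖P‖ := by
      gcongr; exact norm_mul_le_card_mul _ _
    _ = Fintype.card m * Fintype.card n * ‖M‖ * ‖N‖ * ‖P‖ := by ring

theorem norm_mul_mul_sub_mul_mul_le (A A' : Matrix l m α) (X X' : Matrix m n α)
    (W : Matrix n o α) :
    ‖A' * X' * W - A * X * W‖ ≤
      Fintype.card m * Fintype.card n * (‖A'‖ * ‖X' - X‖ + ‖A' - A‖ * ‖X‖) * ‖W‖ := by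
  have hsplit : A' * X' * W - A * X * W = A' * (X' - X) * W + (A' - A) * X * W := by
    simp only [Matrix.mul_sub, Matrix.sub_mul]
    abel
  calc ‖A' * X' * W - A * X * W‖
      ≤ ‖A' * (X' - X) * W‖ + ‖(A' - A) * X * W‖ := hsplit ▸ norm_add_le _ _
    _ ≤ Fintype.card m * Fintype.card n * ‖A'‖ * ‖X' - X‖ * ‖W‖ +
        Fintype.card m * Fintype.card n * ‖A' - A‖ * ‖X‖ * ‖W‖ :=
      add_le_add (norm_mul_mul_le_card_mul _ _ _) (norm_mul_mul_le_card_mul _ _ _)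
    _ = _ := by ring

theorem norm_map_sub_map_le {β : Type*} [NormedAddCommGroup β] {f : α → β} {ρ : ℝ}
    (hρ : 0 ≤ ρ) (hf : ∀ x y, ‖f x - f y‖ ≤ ρ * ‖x - y‖) (M N : Matrix l n α) :
    ‖M.map f - N.map f‖ ≤ ρ * ‖M - N‖ :=
  (norm_le_iff (by positivity)).2 fun i j =>
    (hf (M i j) (N i j)).trans <| by gcongr; exact norm_entry_le_entrywise_sup_norm (M - N)

end Matrix

open Matrix in
theorem gcn_output_error_bound_general {n d : ℕ} {β α ρ : ℝ}
    (hρ : 0 ≤ ρ) (σ : ℝ → ℝ) (hσ : ∀ x y : ℝ, |σ x - σ y| ≤ ρ * |x - y|)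
    (A A' : Matrix (Fin n) (Fin n) ℝ) (X X' : Matrix (Fin n) (Fin d) ℝ)
    (W : Matrix (Fin d) (Fin d) ℝ)
    (hA' : ‖A'‖ ≤ β) (hX : ‖X‖ ≤ β) (hW : ‖W‖ ≤ β)
    (hXX : ‖X' - X‖ ≤ α * ‖A' - A‖) :
    ‖(A' * X' * W).map σ - (A * X * W).map σ‖ ≤
      ρ * (1 + α) * n * d * β ^ 2 * ‖A' - A‖ := by
  have hβ : 0 ≤ β := (norm_nonneg _).trans hA'
  have hαε : 0 ≤ α * ‖A' - A‖ := (norm_nonneg _).trans hXX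
  have hprod : ‖A' * X' * W - A * X * W‖ ≤ (1 + α) * n * d * β ^ 2 * ‖A' - A‖ :=
    calc ‖A' * X' * W - A * X * W‖
        ≤ n * d * (‖A'‖ * ‖X' - X‖ + ‖A' - A‖ * ‖X‖) * ‖W‖ := by
          simpa using norm_mul_mul_sub_mul_mul_le A A' X X' W
      _ ≤ n * d * (β * (α * ‖A' - A‖) + ‖A' - A‖ * β) * β := by gcongr
      _ = (1 + α) * n * d * β ^ 2 * ‖A' - A‖ := by ring
  calc ‖(A' * X' * W).map σ - (A * X * W).map σ‖
      ≤ ρ * ‖A' * X' * W - A * X * W‖ :=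
        norm_map_sub_map_le hρ (fun x y => by simpa only [Real.norm_eq_abs] using hσ x y) _ _
    _ ≤ ρ * ((1 + α) * n * d * β ^ 2 * ‖A' - A‖) := by gcongr
    _ = ρ * (1 + α) * n * d * β ^ 2 * ‖A' - A‖ := by ring

/-- Error bound for the outputs of a single-layer GCN with a ρ-Lipschitz
activation `σ` and approximate inputs `A'`, `X'`: if `‖A'‖ ≤ β`, `‖X‖ ≤ β`,
`‖W‖ ≤ β` and `‖X' - X‖ ≤ α * ε` where `ε = ‖A' - A‖`, then
`‖σ(A' * X' * W) - σ(A * X * W)‖ ≤ ρ * (1 + α) * n * d * β ^ 2 * ε`. -/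
theorem gcn_output_error_bound {n d : ℕ} {β α ρ : ℝ} (hβ : 0 ≤ β) (hα : 0 ≤ α)
    (hρ : 0 ≤ ρ) (σ : ℝ → ℝ) (hσ : ∀ x y : ℝ, |σ x - σ y| ≤ ρ * |x - y|)
    (A A' : Matrix (Fin n) (Fin n) ℝ) (X X' : Matrix (Fin n) (Fin d) ℝ)
    (W : Matrix (Fin d) (Fin d) ℝ)
    (hA' : ‖A'‖ ≤ β) (hX : ‖X‖ ≤ β) (hW : ‖W‖ ≤ β)
    (hXX : ‖X' - X‖ ≤ α * ‖A' - A‖) :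
    ‖(A' * X' * W).map σ - (A * X * W).map σ‖ ≤
      ρ * (1 + α) * n * d * β ^ 2 * ‖A' - A‖ :=
  gcn_output_error_bound_general hρ σ hσ A A' X X' W hA' hX hW hXX
end

section
/- Fix positive integers n, d, L and reals ρ ≥ 0, β ≥ 0. There exists a constant C ≥ 0, depending only on ρ, β, n, d, L, such that the following holds. Let σ : ℝ → ℝ be ρ-Lipschitz with σ(0) = 0; let σ' : ℝ → ℝ satisfy |σ'(x)| ≤ β for all x and be ρ-Lipschitz; let Φ map n×d matrices to n×d matrices with ‖Φ(Z₁) − Φ(Z₂)‖ ≤ ρ·‖Z₁ − Z₂‖ and ‖Φ(Z)‖ ≤ β for all Z, Z₁, Z₂. Let A, A_SG be n×n matrices with ‖A‖ ≤ β, ‖A_SG‖ ≤ β, let X be an n×d matrix with ‖X‖ ≤ β, and let W^(0), …, W^(L−1) be d×d matrices with ‖W^(l)‖ ≤ β. Run the GCN forward recursion with σ to get Z^(l) (resp. Z_SG^(l) using A_SG), and run the backward recursion with σ', terminal gradients G^(L) = Φ(Z^(L)) and G_SG^(L) = Φ(Z_SG^(L)), obtaining G^(l) and G_SG^(l) (the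 latter using A_SG and Z_SG^(l)). Then ‖G_SG^(l) − G^(l)‖ ≤ C·‖A_SG − A‖ for all 1 ≤ l ≤ L. -/
/-!
Both passes are layer-by-layer perturbation estimates. Each layer multiplies entrywise sup norms
by at most `n`, `d`, `ρ` and powers of `β`, so every quantity of the SG network is bounded, and each
SG-minus-exact difference splits as `A'H'W - AHW = (A' - A)H'W + A(H' - H)W`, resp.
`S' ⊙ B' - S ⊙ B = (S' - S) ⊙ B' + S ⊙ (B' - B)`; by induction (forward in `l`, then backward from
`L`) every difference is `O(‖A_SG - A‖)`. Constants depending only on `ρ, β, n, d, L` are encoded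
as `=O[⊤]` over the type `GCNSetting n d L ρ β` of all admissible data, so that the big-O
calculus does their bookkeeping.
-/

open Matrix

attribute [local instance] Matrix.normedAddCommGroup

/-- The activations of the GCN forward recursion: `gcnH A X W σ 0 = X` and
`gcnH A X W σ (l+1) = σ(A * gcnH A X W σ l * W l)` entrywise. -/
noncomputable def gcnH {n d : ℕ} (A : Matrix (Fin n) (Fin n) ℝ)
    (X : Matrix (Fin n) (Fin d) ℝ) (W : ℕ → Matrix (Fin d) (Fin d) ℝ)
    (σ : ℝ → ℝ) : ℕ → Matrix (Fin n) (Fin d) ℝ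
  | 0 => X
  | l + 1 => (A * gcnH A X W σ l * W l).map σ

/-- The pre-activations of the GCN forward recursion:
`gcnZ A X W σ (l+1) = A * gcnH A X W σ l * W l` (the value at index 0 is junk). -/
noncomputable def gcnZ {n d : ℕ} (A : Matrix (Fin n) (Fin n) ℝ)
    (X : Matrix (Fin n) (Fin d) ℝ) (W : ℕ → Matrix (Fin d) (Fin d) ℝ)
    (σ : ℝ → ℝ) : ℕ → Matrix (Fin n) (Fin d) ℝ
  | 0 => 0
  | l + 1 => A * gcnH A X W σ l * W l

theorem gcnH_succ {n d : ℕ} (A : Matrix (Fin n) (Fin n) ℝ) (X : Matrix (Fin n) (Fin d) ℝ)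
    (W : ℕ → Matrix (Fin d) (Fin d) ℝ) (σ : ℝ → ℝ) (l : ℕ) :
    gcnH A X W σ (l + 1) = (gcnZ A X W σ (l + 1)).map σ :=
  rfl

open Asymptotics

namespace Matrix

section Algebra

variable {α : Type*} [NonUnitalRing α] {m k p q : Type*}

theorem mul_mul_sub_mul_mul [Fintype k] [Fintype p] (A A' : Matrix m k α)
    (H H' : Matrix k p α) (W : Matrix p q α) :
    A' * H' * W - A * H * W = (A' - A) * H' * W + A * (H' - H) * W := by
  simp only [Matrix.sub_mul, Matrix.mul_sub]
  abel

theorem hadamard_sub_hadamard (S S' B B' : Matrix m p α) :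
    S' ⊙ B' - S ⊙ B = (S' - S) ⊙ B' + S ⊙ (B' - B) := by
  ext i j
  simp only [sub_apply, add_apply, hadamard_apply]
  noncomm_ring

end Algebra

section Norm

variable {α : Type*} [NormedRing α] {m k p : Type*} [Fintype m] [Fintype k] [Fintype p]

theorem norm_mul_le_card_mul_s11 (A : Matrix m k α) (B : Matrix k p α) :
    ‖A * B‖ ≤ Fintype.card k * ‖A‖ * ‖B‖ := by
  refine (norm_le_iff (by positivity)).2 fun i j => ?_
  calc ‖(A * B) i j‖ ≤ ∑ x, ‖A i x‖ * ‖B x j‖ :=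
        (norm_sum_le _ _).trans (Finset.sum_le_sum fun x _ => norm_mul_le _ _)
    _ ≤ ∑ _x : k, ‖A‖ * ‖B‖ := by
        gcongr <;> exact norm_entry_le_entrywise_sup_norm _
    _ = Fintype.card k * ‖A‖ * ‖B‖ := by
        rw [Finset.sum_const, Finset.card_univ, nsmul_eq_mul, mul_assoc]

theorem norm_hadamard_le (A B : Matrix m p α) : ‖A ⊙ B‖ ≤ ‖A‖ * ‖B‖ :=
  (norm_le_iff (by positivity)).2 fun _ _ => (norm_mul_le _ _).trans <|
    mul_le_mul (norm_entry_le_entrywise_sup_norm _) (norm_entry_le_entrywise_sup_norm _)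
      (norm_nonneg _) (norm_nonneg _)

theorem norm_map_sub_map_le_s11 {ρ : ℝ} {σ : ℝ → ℝ} (hσ : ∀ x y, |σ x - σ y| ≤ ρ * |x - y|)
    (A B : Matrix m p ℝ) : ‖A.map σ - B.map σ‖ ≤ ρ * ‖A - B‖ := by
  have hρ : 0 ≤ ρ := by simpa using (abs_nonneg _).trans (hσ 1 0)
  refine (norm_le_iff (by positivity)).2 fun i j => ?_
  simpa only [sub_apply, map_apply, Real.norm_eq_abs] using
    (hσ (A i j) (B i j)).trans
      (mul_le_mul_of_nonneg_left ((A - B).norm_entry_le_entrywise_sup_norm) hρ)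

theorem norm_map_le_of_abs_le {β : ℝ} {σ : ℝ → ℝ} (hσ : ∀ x, |σ x| ≤ β) (A : Matrix m p ℝ) :
    ‖A.map σ‖ ≤ β :=
  (norm_le_iff ((abs_nonneg _).trans (hσ 0))).2 fun i j => hσ (A i j)

end Norm

end Matrix

namespace Asymptotics

variable {ι : Type*} {l : Filter ι} {α : Type*} [NormedRing α]
  {m k p q : Type*} [Fintype m] [Fintype k] [Fintype p] [Fintype q]

theorem isBigO_one_of_norm_le {E : Type*} [Norm E] {β : ℝ} {f : ι → E} (hf : ∀ x, ‖f x‖ ≤ β) :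
    f =O[l] fun _ => (1 : ℝ) :=
  isBigO_of_le' (c := β) l fun x => by simpa using hf x

theorem IsBigO.matrix_mul {f : ι → Matrix m k α} {h : ι → Matrix k p α} {g₁ g₂ : ι → ℝ}
    (hf : f =O[l] g₁) (hh : h =O[l] g₂) : (fun x => f x * h x) =O[l] fun x => g₁ x * g₂ x :=
  (isBigO_of_le' (c := Fintype.card k) l fun x => by
      rw [Real.norm_of_nonneg (by positivity), ← mul_assoc]
      exact Matrix.norm_mul_le_card_mul_s11 _ _).trans
    (hf.norm_left.mul hh.norm_left)

theorem IsBigO.matrix_hadamard {f h : ι → Matrix m p α} {g₁ g₂ : ι → ℝ}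
    (hf : f =O[l] g₁) (hh : h =O[l] g₂) : (fun x => f x ⊙ h x) =O[l] fun x => g₁ x * g₂ x :=
  (isBigO_of_le l fun x => by
      rw [Real.norm_of_nonneg (by positivity)]
      exact Matrix.norm_hadamard_le _ _).trans
    (hf.norm_left.mul hh.norm_left)

theorem IsBigO.matrix_transpose {E : Type*} [Norm E] {f : ι → Matrix m p α} {g : ι → E}
    (hf : f =O[l] g) : (fun x => (f x)ᵀ) =O[l] g :=
  (isBigO_of_le l fun _ => (Matrix.norm_transpose _).le).trans hf

theorem isBigO_matrix_map_sub_map {ρ : ℝ} {σ : ι → ℝ → ℝ}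
    (hσ : ∀ x a b, |σ x a - σ x b| ≤ ρ * |a - b|) (f h : ι → Matrix m p ℝ) :
    (fun x => (f x).map (σ x) - (h x).map (σ x)) =O[l] fun x => f x - h x :=
  isBigO_of_le' l fun x => Matrix.norm_map_sub_map_le_s11 (hσ x) _ _

theorem isBigO_matrix_map {ρ : ℝ} {σ : ι → ℝ → ℝ}
    (hσ : ∀ x a b, |σ x a - σ x b| ≤ ρ * |a - b|) (hσ₀ : ∀ x, σ x 0 = 0) (f : ι → Matrix m p ℝ) :
    (fun x => (f x).map (σ x)) =O[l] f :=
  (isBigO_matrix_map_sub_map hσ f 0).congr (fun x => by simp [Matrix.map_zero _ (hσ₀ x)])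
    fun _ => sub_zero _

theorem isBigO_matrix_mul_mul_sub_mul_mul {A A' : ι → Matrix m k α} {H H' : ι → Matrix k p α}
    {W : ι → Matrix p q α} {g : ι → ℝ} (hA : A =O[l] fun _ => (1 : ℝ))
    (hH' : H' =O[l] fun _ => (1 : ℝ)) (hW : W =O[l] fun _ => (1 : ℝ))
    (hdA : (fun x => A' x - A x) =O[l] g) (hdH : (fun x => H' x - H x) =O[l] g) :
    (fun x => A' x * H' x * W x - A x * H x * W x) =O[l] g := by
  simp only [Matrix.mul_mul_sub_mul_mul]
  refine IsBigO.add ?_ ?_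
  · simpa only [mul_one] using (hdA.matrix_mul hH').matrix_mul hW
  · simpa only [mul_one, one_mul] using (hA.matrix_mul hdH).matrix_mul hW

theorem isBigO_matrix_hadamard_sub_hadamard {S S' B B' : ι → Matrix m p α} {g : ι → ℝ}
    (hS : S =O[l] fun _ => (1 : ℝ)) (hB' : B' =O[l] fun _ => (1 : ℝ))
    (hdS : (fun x => S' x - S x) =O[l] g) (hdB : (fun x => B' x - B x) =O[l] g) :
    (fun x => S' x ⊙ B' x - S x ⊙ B x) =O[l] g := by
  simp only [Matrix.hadamard_sub_hadamard]
  refine IsBigO.add ?_ ?_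
  · simpa only [mul_one] using hdS.matrix_hadamard hB'
  · simpa only [one_mul] using hS.matrix_hadamard hdB

end Asymptotics

structure GCNSetting (n d L : ℕ) (ρ β : ℝ) where
  σ : ℝ → ℝ
  σ' : ℝ → ℝ
  Φ : Matrix (Fin n) (Fin d) ℝ → Matrix (Fin n) (Fin d) ℝ
  A : Matrix (Fin n) (Fin n) ℝ
  ASG : Matrix (Fin n) (Fin n) ℝ
  X : Matrix (Fin n) (Fin d) ℝ
  W : ℕ → Matrix (Fin d) (Fin d) ℝ
  G : ℕ → Matrix (Fin n) (Fin d) ℝ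
  GSG : ℕ → Matrix (Fin n) (Fin d) ℝ
  σ_lipschitz : ∀ x y : ℝ, |σ x - σ y| ≤ ρ * |x - y|
  σ_zero : σ 0 = 0
  σ'_bound : ∀ x : ℝ, |σ' x| ≤ β
  σ'_lipschitz : ∀ x y : ℝ, |σ' x - σ' y| ≤ ρ * |x - y|
  Φ_lipschitz : ∀ Z₁ Z₂, ‖Φ Z₁ - Φ Z₂‖ ≤ ρ * ‖Z₁ - Z₂‖
  Φ_bound : ∀ Z, ‖Φ Z‖ ≤ β
  norm_A_le : ‖A‖ ≤ β
  norm_ASG_le : ‖ASG‖ ≤ β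
  norm_X_le : ‖X‖ ≤ β
  norm_W_le : ∀ l, l < L → ‖W l‖ ≤ β
  G_last : G L = Φ (gcnZ A X W σ L)
  GSG_last : GSG L = Φ (gcnZ ASG X W σ L)
  G_step : ∀ l, 1 ≤ l → l < L →
    G l = ((gcnZ A X W σ l).map σ') ⊙ (Aᵀ * G (l + 1) * (W l)ᵀ)
  GSG_step : ∀ l, 1 ≤ l → l < L →
    GSG l = ((gcnZ ASG X W σ l).map σ') ⊙ (ASGᵀ * GSG (l + 1) * (W l)ᵀ)

namespace GCNSetting

variable {n d L : ℕ} {ρ β : ℝ}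

local notation "𝒮" => GCNSetting n d L ρ β

theorem isBigO_gcnH_ASG {l : ℕ} (hl : l ≤ L) :
    (fun c : 𝒮 => gcnH c.ASG c.X c.W c.σ l) =O[⊤] fun _ => (1 : ℝ) := by
  induction l with
  | zero => exact isBigO_one_of_norm_le norm_X_le
  | succ l ih =>
    have hprod := ((isBigO_one_of_norm_le norm_ASG_le).matrix_mul (ih (by omega))).matrix_mul
      (isBigO_one_of_norm_le fun c : 𝒮 => c.norm_W_le l (by omega))
    exact (isBigO_matrix_map (fun c : 𝒮 => c.σ_lipschitz) (fun c => c.σ_zero) _).trans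
      (by simpa only [mul_one] using hprod)

theorem isBigO_gcnZ_succ_sub {l : ℕ} (hl : l < L)
    (hH : (fun c : 𝒮 => gcnH c.ASG c.X c.W c.σ l - gcnH c.A c.X c.W c.σ l) =O[⊤]
      fun c => ‖c.ASG - c.A‖) :
    (fun c : 𝒮 => gcnZ c.ASG c.X c.W c.σ (l + 1) - gcnZ c.A c.X c.W c.σ (l + 1)) =O[⊤]
      fun c => ‖c.ASG - c.A‖ :=
  isBigO_matrix_mul_mul_sub_mul_mul (isBigO_one_of_norm_le norm_A_le) (isBigO_gcnH_ASG hl.le)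
    (isBigO_one_of_norm_le fun c => c.norm_W_le l hl) (isBigO_norm_right.2 (isBigO_refl _ _)) hH

theorem isBigO_gcnH_sub {l : ℕ} (hl : l ≤ L) :
    (fun c : 𝒮 => gcnH c.ASG c.X c.W c.σ l - gcnH c.A c.X c.W c.σ l) =O[⊤]
      fun c => ‖c.ASG - c.A‖ := by
  induction l with
  | zero => exact (isBigO_zero _ ⊤).congr_left fun c => (sub_self c.X).symm
  | succ l ih =>
    simp only [gcnH_succ]
    exact (isBigO_matrix_map_sub_map (fun c : 𝒮 => c.σ_lipschitz) _ _).trans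
      (isBigO_gcnZ_succ_sub hl (ih (by omega)))

theorem isBigO_gcnZ_sub {l : ℕ} (hl : l ≤ L) :
    (fun c : 𝒮 => gcnZ c.ASG c.X c.W c.σ l - gcnZ c.A c.X c.W c.σ l) =O[⊤]
      fun c => ‖c.ASG - c.A‖ := by
  cases l with
  | zero => exact (isBigO_zero _ ⊤).congr_left fun _ => (sub_zero 0).symm
  | succ l => exact isBigO_gcnZ_succ_sub hl (isBigO_gcnH_sub (by omega))

theorem isBigO_map_σ' (f : 𝒮 → Matrix (Fin n) (Fin d) ℝ) :
    (fun c => (f c).map c.σ') =O[⊤] fun _ => (1 : ℝ) :=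
  isBigO_one_of_norm_le fun c => Matrix.norm_map_le_of_abs_le c.σ'_bound _

theorem isBigO_backprop_GSG {l : ℕ} (hl : l < L)
    (hG : (fun c : 𝒮 => c.GSG (l + 1)) =O[⊤] fun _ => (1 : ℝ)) :
    (fun c : 𝒮 => c.ASGᵀ * c.GSG (l + 1) * (c.W l)ᵀ) =O[⊤] fun _ => (1 : ℝ) := by
  simpa only [mul_one] using
    ((isBigO_one_of_norm_le norm_ASG_le).matrix_transpose.matrix_mul hG).matrix_mul
      (isBigO_one_of_norm_le fun c : 𝒮 => c.norm_W_le l hl).matrix_transpose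

theorem isBigO_GSG {l : ℕ} (hl₁ : 1 ≤ l) (hl : l ≤ L) :
    (fun c : 𝒮 => c.GSG l) =O[⊤] fun _ => (1 : ℝ) := by
  induction hl using Nat.decreasingInduction with
  | self => exact isBigO_one_of_norm_le fun c => c.GSG_last ▸ c.Φ_bound _
  | of_succ l hl ih =>
    have hB := isBigO_backprop_GSG hl (ih (by omega))
    simpa only [mul_one] using ((isBigO_map_σ' _).matrix_hadamard hB).congr_left
      fun c => (c.GSG_step l hl₁ hl).symm

theorem isBigO_GSG_sub_G {l : ℕ} (hl₁ : 1 ≤ l) (hl : l ≤ L) :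
    (fun c : 𝒮 => c.GSG l - c.G l) =O[⊤] fun c => ‖c.ASG - c.A‖ := by
  induction hl using Nat.decreasingInduction with
  | self =>
    refine (isBigO_of_le' (c := ρ) ⊤ fun c => ?_).trans (isBigO_gcnZ_sub le_rfl)
    rw [c.GSG_last, c.G_last]
    exact c.Φ_lipschitz _ _
  | of_succ l hl ih =>
    have hdS := (isBigO_matrix_map_sub_map (fun c : 𝒮 => c.σ'_lipschitz) _ _).trans
      (isBigO_gcnZ_sub hl.le)
    have hdA : (fun c : 𝒮 => c.ASGᵀ - c.Aᵀ) =O[⊤] fun c => ‖c.ASG - c.A‖ :=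
      (isBigO_norm_right.2 (isBigO_refl (fun c : 𝒮 => c.ASG - c.A) ⊤)).matrix_transpose
        |>.congr_left fun c => transpose_sub _ _
    have hdB := isBigO_matrix_mul_mul_sub_mul_mul
      (isBigO_one_of_norm_le norm_A_le).matrix_transpose (isBigO_GSG (by omega) hl)
      (isBigO_one_of_norm_le fun c : 𝒮 => c.norm_W_le l hl).matrix_transpose hdA (ih (by omega))
    refine (isBigO_matrix_hadamard_sub_hadamard (isBigO_map_σ' _)
      (isBigO_backprop_GSG hl (isBigO_GSG (by omega) hl)) hdS hdB).congr_left fun c => ?_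
    rw [c.GSG_step l hl₁ hl, c.G_step l hl₁ hl]

end GCNSetting

theorem gcn_gradZ_error_bounded_general {n d L : ℕ} {ρ β : ℝ} :
    ∃ C : ℝ, 0 ≤ C ∧
      ∀ (σ : ℝ → ℝ), (∀ x y : ℝ, |σ x - σ y| ≤ ρ * |x - y|) → σ 0 = 0 →
      ∀ (σ' : ℝ → ℝ), (∀ x : ℝ, |σ' x| ≤ β) →
        (∀ x y : ℝ, |σ' x - σ' y| ≤ ρ * |x - y|) →
      ∀ (Φ : Matrix (Fin n) (Fin d) ℝ → Matrix (Fin n) (Fin d) ℝ),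
        (∀ Z₁ Z₂, ‖Φ Z₁ - Φ Z₂‖ ≤ ρ * ‖Z₁ - Z₂‖) → (∀ Z, ‖Φ Z‖ ≤ β) →
      ∀ (A ASG : Matrix (Fin n) (Fin n) ℝ), ‖A‖ ≤ β → ‖ASG‖ ≤ β →
      ∀ (X : Matrix (Fin n) (Fin d) ℝ), ‖X‖ ≤ β →
      ∀ (W : ℕ → Matrix (Fin d) (Fin d) ℝ), (∀ l, l < L → ‖W l‖ ≤ β) →
      ∀ (G GSG : ℕ → Matrix (Fin n) (Fin d) ℝ),
        G L = Φ (gcnZ A X W σ L) →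
        GSG L = Φ (gcnZ ASG X W σ L) →
        (∀ l, 1 ≤ l → l < L →
          G l = Matrix.hadamard ((gcnZ A X W σ l).map σ')
            (Aᵀ * G (l + 1) * (W l)ᵀ)) →
        (∀ l, 1 ≤ l → l < L →
          GSG l = Matrix.hadamard ((gcnZ ASG X W σ l).map σ')
            (ASGᵀ * GSG (l + 1) * (W l)ᵀ)) →
      ∀ l, 1 ≤ l → l ≤ L → ‖GSG l - G l‖ ≤ C * ‖ASG - A‖ := by
  have hsum : (fun c : GCNSetting n d L ρ β => ∑ l ∈ Finset.Icc 1 L, ‖c.GSG l - c.G l‖) =O[⊤]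
      fun c => ‖c.ASG - c.A‖ :=
    IsBigO.fun_sum fun l hl =>
      (GCNSetting.isBigO_GSG_sub_G (Finset.mem_Icc.1 hl).1 (Finset.mem_Icc.1 hl).2).norm_left
  obtain ⟨C, hC, hCsum⟩ := hsum.exists_nonneg
  refine ⟨C, hC, fun σ hσ hσ₀ σ' hσ'b hσ'l Φ hΦl hΦb A ASG hA hASG X hX W hW G GSG hGL hGSGL
    hG hGSG l hl₁ hl => ?_⟩
  have hc := isBigOWith_top.1 hCsum
    ⟨σ, σ', Φ, A, ASG, X, W, G, GSG, hσ, hσ₀, hσ'b, hσ'l, hΦl, hΦb, hA, hASG, hX, hW, hGL, hGSGL,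
      hG, hGSG⟩
  rw [Real.norm_of_nonneg (by positivity), norm_norm] at hc
  exact (Finset.single_le_sum (fun k _ => norm_nonneg (GSG k - G k))
    (Finset.mem_Icc.2 ⟨hl₁, hl⟩)).trans hc

/-- Error bound for the gradients `G^(l) = ∂f/∂Z^(l)` of a multi-layer GCN:
there is a constant `C`, depending only on ρ, β, n, d, L, such that the
gradients of the SG estimator (forward and backward recursions with `A_SG` in
place of `A`, terminal gradient `Φ(Z^(L))` resp. `Φ(Z_SG^(L))`) satisfy
`‖G_SG^(l) - G^(l)‖ ≤ C * ‖A_SG - A‖` for all `1 ≤ l ≤ L`. -/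
theorem gcn_gradZ_error_bounded {n d L : ℕ} (hn : 0 < n) (hd : 0 < d) (hL : 0 < L)
    {ρ β : ℝ} (hρ : 0 ≤ ρ) (hβ : 0 ≤ β) :
    ∃ C : ℝ, 0 ≤ C ∧
      ∀ (σ : ℝ → ℝ), (∀ x y : ℝ, |σ x - σ y| ≤ ρ * |x - y|) → σ 0 = 0 →
      ∀ (σ' : ℝ → ℝ), (∀ x : ℝ, |σ' x| ≤ β) →
        (∀ x y : ℝ, |σ' x - σ' y| ≤ ρ * |x - y|) →
      ∀ (Φ : Matrix (Fin n) (Fin d) ℝ → Matrix (Fin n) (Fin d) ℝ),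
        (∀ Z₁ Z₂, ‖Φ Z₁ - Φ Z₂‖ ≤ ρ * ‖Z₁ - Z₂‖) → (∀ Z, ‖Φ Z‖ ≤ β) →
      ∀ (A ASG : Matrix (Fin n) (Fin n) ℝ), ‖A‖ ≤ β → ‖ASG‖ ≤ β →
      ∀ (X : Matrix (Fin n) (Fin d) ℝ), ‖X‖ ≤ β →
      ∀ (W : ℕ → Matrix (Fin d) (Fin d) ℝ), (∀ l, l < L → ‖W l‖ ≤ β) →
      ∀ (G GSG : ℕ → Matrix (Fin n) (Fin d) ℝ),
        G L = Φ (gcnZ A X W σ L) →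
        GSG L = Φ (gcnZ ASG X W σ L) →
        (∀ l, 1 ≤ l → l < L →
          G l = Matrix.hadamard ((gcnZ A X W σ l).map σ')
            (Aᵀ * G (l + 1) * (W l)ᵀ)) →
        (∀ l, 1 ≤ l → l < L →
          GSG l = Matrix.hadamard ((gcnZ ASG X W σ l).map σ')
            (ASGᵀ * GSG (l + 1) * (W l)ᵀ)) →
      ∀ l, 1 ≤ l → l ≤ L → ‖GSG l - G l‖ ≤ C * ‖ASG - A‖ :=
  gcn_gradZ_error_bounded_general
end

section
/- Let β ≥ 0, ε ≥ 0 and B̂, C̃, Ĉ, D̂ ≥ 0. Let A, A_SG be n×n matrices with ‖A_SG‖ ≤ β and ‖A_SG − A‖ ≤ ε; let H, H_SG be n×d matrices with ‖H‖ ≤ B̂, ‖H_SG‖ ≤ B̂ and ‖H_SG − H‖ ≤ C̃·ε; and let G, G_SG be n×d matrices with ‖G_SG − G‖ ≤ Ĉ·ε and ‖G‖ ≤ D̂·β. Then ‖(A_SG·H_SG)ᵀ·G_SG − (A·H)ᵀ·G‖ ≤ n²·β·(B̂·Ĉ + β·C̃·D̂ + B̂·D̂)·ε. -/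
open Matrix

attribute [local instance] Matrix.normedAddCommGroup

private lemma sup_norm_mul_le {m n p : ℕ} (M : Matrix (Fin m) (Fin n) ℝ)
    (N : Matrix (Fin n) (Fin p) ℝ) : ‖M * N‖ ≤ (n : ℝ) * ‖M‖ * ‖N‖ := by
  have hM : 0 ≤ ‖M‖ := norm_nonneg _
  have hN : 0 ≤ ‖N‖ := norm_nonneg _
  rw [Matrix.norm_le_iff (by positivity)]
  intro i j
  calc ‖(M * N) i j‖ = |∑ k, M i k * N k j| := by rfl
    _ ≤ ∑ k, |M i k * N k j| := Finset.abs_sum_le_sum_abs _ _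
    _ ≤ ∑ _k : Fin n, ‖M‖ * ‖N‖ := by
        apply Finset.sum_le_sum
        intro k _
        rw [abs_mul]
        exact mul_le_mul (M.norm_entry_le_entrywise_sup_norm)
          (N.norm_entry_le_entrywise_sup_norm) (abs_nonneg _) hM
    _ = (n : ℝ) * ‖M‖ * ‖N‖ := by simp [Finset.sum_const, mul_assoc]

/-- Error bound for the weight gradient `(A·H)ᵀ·G` of a multi-layer GCN computed
with approximate quantities `A_SG`, `H_SG`, `G_SG`. -/
theorem gcn_gradW_step_error_bound {n d : ℕ} {β ε Bhat Ctilde Chat Dhat : ℝ}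
    (hβ : 0 ≤ β) (hε : 0 ≤ ε) (hBhat : 0 ≤ Bhat) (hCtilde : 0 ≤ Ctilde)
    (hChat : 0 ≤ Chat) (hDhat : 0 ≤ Dhat)
    (A ASG : Matrix (Fin n) (Fin n) ℝ) (hASG : ‖ASG‖ ≤ β) (hAdiff : ‖ASG - A‖ ≤ ε)
    (H HSG : Matrix (Fin n) (Fin d) ℝ) (hH : ‖H‖ ≤ Bhat) (hHSG : ‖HSG‖ ≤ Bhat)
    (hHdiff : ‖HSG - H‖ ≤ Ctilde * ε)
    (G GSG : Matrix (Fin n) (Fin d) ℝ) (hGdiff : ‖GSG - G‖ ≤ Chat * ε)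
    (hG : ‖G‖ ≤ Dhat * β) :
    ‖(ASG * HSG)ᵀ * GSG - (A * H)ᵀ * G‖ ≤
      (n : ℝ) ^ 2 * β * (Bhat * Chat + β * Ctilde * Dhat + Bhat * Dhat) * ε := by
  have hn : (0:ℝ) ≤ n := Nat.cast_nonneg n
  have key : (ASG * HSG)ᵀ * GSG - (A * H)ᵀ * G
      = (ASG * HSG)ᵀ * (GSG - G) + (ASG * (HSG - H))ᵀ * G + ((ASG - A) * H)ᵀ * G := by
    simp only [Matrix.mul_sub, Matrix.sub_mul, Matrix.transpose_sub]
    abel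
  -- bounds
  have h1 : ‖(ASG * HSG)ᵀ * (GSG - G)‖ ≤ (n:ℝ)^2 * β * (Bhat * Chat) * ε := by
    calc ‖(ASG * HSG)ᵀ * (GSG - G)‖ ≤ (n:ℝ) * ‖(ASG * HSG)ᵀ‖ * ‖GSG - G‖ :=
          sup_norm_mul_le _ _
      _ = (n:ℝ) * ‖ASG * HSG‖ * ‖GSG - G‖ := by rw [Matrix.norm_transpose]
      _ ≤ (n:ℝ) * ((n:ℝ) * β * Bhat) * (Chat * ε) := by
          apply mul_le_mul _ hGdiff (norm_nonneg _) (by positivity)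
          apply mul_le_mul_of_nonneg_left _ hn
          calc ‖ASG * HSG‖ ≤ (n:ℝ) * ‖ASG‖ * ‖HSG‖ := sup_norm_mul_le _ _
            _ ≤ (n:ℝ) * β * Bhat := by
                apply mul_le_mul _ hHSG (norm_nonneg _) (by positivity)
                exact mul_le_mul_of_nonneg_left hASG hn
      _ = (n:ℝ)^2 * β * (Bhat * Chat) * ε := by ring
  have h2 : ‖(ASG * (HSG - H))ᵀ * G‖ ≤ (n:ℝ)^2 * β * (β * Ctilde * Dhat) * ε := by
    calc ‖(ASG * (HSG - H))ᵀ * G‖ ≤ (n:ℝ) * ‖(ASG * (HSG - H))ᵀ‖ * ‖G‖ :=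
          sup_norm_mul_le _ _
      _ = (n:ℝ) * ‖ASG * (HSG - H)‖ * ‖G‖ := by rw [Matrix.norm_transpose]
      _ ≤ (n:ℝ) * ((n:ℝ) * β * (Ctilde * ε)) * (Dhat * β) := by
          apply mul_le_mul _ hG (norm_nonneg _) (by positivity)
          apply mul_le_mul_of_nonneg_left _ hn
          calc ‖ASG * (HSG - H)‖ ≤ (n:ℝ) * ‖ASG‖ * ‖HSG - H‖ := sup_norm_mul_le _ _
            _ ≤ (n:ℝ) * β * (Ctilde * ε) := by
                apply mul_le_mul _ hHdiff (norm_nonneg _) (by positivity)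
                exact mul_le_mul_of_nonneg_left hASG hn
      _ = (n:ℝ)^2 * β * (β * Ctilde * Dhat) * ε := by ring
  have h3 : ‖((ASG - A) * H)ᵀ * G‖ ≤ (n:ℝ)^2 * β * (Bhat * Dhat) * ε := by
    calc ‖((ASG - A) * H)ᵀ * G‖ ≤ (n:ℝ) * ‖((ASG - A) * H)ᵀ‖ * ‖G‖ :=
          sup_norm_mul_le _ _
      _ = (n:ℝ) * ‖(ASG - A) * H‖ * ‖G‖ := by rw [Matrix.norm_transpose]
      _ ≤ (n:ℝ) * ((n:ℝ) * ε * Bhat) * (Dhat * β) := by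
          apply mul_le_mul _ hG (norm_nonneg _) (by positivity)
          apply mul_le_mul_of_nonneg_left _ hn
          calc ‖(ASG - A) * H‖ ≤ (n:ℝ) * ‖ASG - A‖ * ‖H‖ := sup_norm_mul_le _ _
            _ ≤ (n:ℝ) * ε * Bhat := by
                apply mul_le_mul _ hH (norm_nonneg _) (by positivity)
                exact mul_le_mul_of_nonneg_left hAdiff hn
      _ = (n:ℝ)^2 * β * (Bhat * Dhat) * ε := by ring
  calc ‖(ASG * HSG)ᵀ * GSG - (A * H)ᵀ * G‖
      = ‖(ASG * HSG)ᵀ * (GSG - G) + (ASG * (HSG - H))ᵀ * G + ((ASG - A) * H)ᵀ * G‖ := by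
        rw [key]
    _ ≤ ‖(ASG * HSG)ᵀ * (GSG - G) + (ASG * (HSG - H))ᵀ * G‖ + ‖((ASG - A) * H)ᵀ * G‖ :=
        norm_add_le _ _
    _ ≤ ‖(ASG * HSG)ᵀ * (GSG - G)‖ + ‖(ASG * (HSG - H))ᵀ * G‖ + ‖((ASG - A) * H)ᵀ * G‖ :=
        add_le_add_left (norm_add_le _ _) _
    _ ≤ (n:ℝ)^2 * β * (Bhat * Chat) * ε + (n:ℝ)^2 * β * (β * Ctilde * Dhat) * ε
        + (n:ℝ)^2 * β * (Bhat * Dhat) * ε := add_le_add (add_le_add h1 h2) h3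
    _ = (n : ℝ) ^ 2 * β * (Bhat * Chat + β * Ctilde * Dhat + Bhat * Dhat) * ε := by ring
end

section
/- Let E be a real inner product space, ρ > 0, and let f : E → ℝ be differentiable and ρ-smooth. Let f_* ∈ ℝ satisfy f_* ≤ f(x) for all x ∈ E. Let C ≥ 0, ε ≥ 0, let T be a positive integer, let γ satisfy 0 < γ ≤ 1/ρ, and let iterates W₁, W₂, …, W_{T+1} ∈ E and errors δ₁, …, δ_T ∈ E satisfy W_{t+1} = W_t − γ·(∇f(W_t) + δ_t), |⟪∇f(W_t), δ_t⟫| ≤ C·ε, and ‖δ_t‖² ≤ C for every 1 ≤ t ≤ T. Then (γ − (ρ/2)·γ²)·Σ_{t=1}^{T} ‖∇f(W_t)‖² ≤ f(W₁) − f_* + C·T·(γ − ρ·γ²)·ε + (ρ/2)·C·T·γ². -/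
open scoped RealInnerProductSpace

/-!
The smoothness upper bound, applied to one step `x ↦ x - γ • (g x + d)`, gives
`f y ≤ f x - (γ - ρ/2 γ²) ‖g x‖² - (γ - ργ²) ⟪g x, d⟫ + ρ/2 γ² ‖d‖²`.
Since `γ ≤ 1/ρ` makes `γ - ργ²` nonnegative, the error terms are bounded by `C ε` and `C`,
and summing over the `T` steps telescopes `f`, which is bounded below by `f_*`.
-/

section DescentStep

variable {E : Type*} [NormedAddCommGroup E] [InnerProductSpace ℝ E]

lemma apply_sub_smul_le_of_smooth {f : E → ℝ} {g : E → E} {ρ γ : ℝ} {x v : E}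
    (hsmooth : ∀ y, f y - f x - ⟪g x, y - x⟫ ≤ ρ / 2 * ‖y - x‖ ^ 2) :
    f (x - γ • v) ≤ f x - γ * ⟪g x, v⟫ + ρ / 2 * γ ^ 2 * ‖v‖ ^ 2 := by
  have h := hsmooth (x - γ • v)
  rw [sub_sub_cancel_left, inner_neg_right, real_inner_smul_right, norm_neg, norm_smul,
    Real.norm_eq_abs, mul_pow, sq_abs] at h
  linarith

lemma apply_sub_smul_add_le_of_smooth {f : E → ℝ} {g : E → E} {ρ γ : ℝ} {x d : E}
    (hsmooth : ∀ y, f y - f x - ⟪g x, y - x⟫ ≤ ρ / 2 * ‖y - x‖ ^ 2) :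
    f (x - γ • (g x + d)) ≤ f x - (γ - ρ / 2 * γ ^ 2) * ‖g x‖ ^ 2
      - (γ - ρ * γ ^ 2) * ⟪g x, d⟫ + ρ / 2 * γ ^ 2 * ‖d‖ ^ 2 := by
  have h := apply_sub_smul_le_of_smooth (γ := γ) (v := g x + d) hsmooth
  rw [inner_add_right, real_inner_self_eq_norm_sq, norm_add_sq_real] at h
  linarith

lemma mul_norm_sq_le_of_descent_step {f : E → ℝ} {g : E → E} {ρ γ C c : ℝ} {x d : E}
    (hsmooth : ∀ y, f y - f x - ⟪g x, y - x⟫ ≤ ρ / 2 * ‖y - x‖ ^ 2)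
    (hρ : 0 ≤ ρ) (hγ : 0 ≤ γ - ρ * γ ^ 2) (hip : -c ≤ ⟪g x, d⟫) (hd : ‖d‖ ^ 2 ≤ C) :
    (γ - ρ / 2 * γ ^ 2) * ‖g x‖ ^ 2 ≤
      f x - f (x - γ • (g x + d)) + c * (γ - ρ * γ ^ 2) + ρ / 2 * C * γ ^ 2 := by
  have h := apply_sub_smul_add_le_of_smooth (γ := γ) (d := d) hsmooth
  linarith [mul_le_mul_of_nonneg_left hip hγ,
    mul_le_mul_of_nonneg_left hd (by positivity : 0 ≤ ρ / 2 * γ ^ 2)]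

end DescentStep

lemma sum_Icc_le_of_le_sub_succ_add {a u : ℕ → ℝ} {m K : ℝ} {T : ℕ}
    (hstep : ∀ t ∈ Finset.Icc 1 T, a t ≤ u t - u (t + 1) + K) (hm : m ≤ u (T + 1)) :
    ∑ t ∈ Finset.Icc 1 T, a t ≤ u 1 - m + T * K := by
  have htel : ∑ t ∈ Finset.Icc 1 T, (u t - u (t + 1)) = u 1 - u (T + 1) := by
    rw [← Finset.Ico_add_one_right_eq_Icc, ← neg_sub (u (T + 1)),
      ← Finset.sum_Ico_sub u (by omega : 1 ≤ T + 1), ← Finset.sum_neg_distrib]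
    simp only [neg_sub]
  calc ∑ t ∈ Finset.Icc 1 T, a t
      ≤ ∑ t ∈ Finset.Icc 1 T, (u t - u (t + 1) + K) := Finset.sum_le_sum hstep
    _ = u 1 - u (T + 1) + T * K := by
      rw [Finset.sum_add_distrib, htel, Finset.sum_const, Nat.card_Icc, nsmul_eq_mul]
      norm_num
    _ ≤ u 1 - m + T * K := by linarith

theorem smooth_descent_sum_general {E : Type*} [NormedAddCommGroup E]
    [InnerProductSpace ℝ E] {ρ : ℝ} (f : E → ℝ) (g : E → E)
    (hsmooth : ∀ x y : E, |f y - f x - ⟪g x, y - x⟫| ≤ ρ / 2 * ‖y - x‖ ^ 2)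
    (fstar : ℝ) (hfstar : ∀ x : E, fstar ≤ f x)
    {C ε : ℝ}
    (T : ℕ) {γ : ℝ} (hγpos : 0 < γ) (hγle : γ ≤ 1 / ρ)
    (W : ℕ → E) (δ : ℕ → E)
    (hupd : ∀ t, 1 ≤ t → t ≤ T → W (t + 1) = W t - γ • (g (W t) + δ t))
    (hip : ∀ t, 1 ≤ t → t ≤ T → |⟪g (W t), δ t⟫| ≤ C * ε)
    (hδ : ∀ t, 1 ≤ t → t ≤ T → ‖δ t‖ ^ 2 ≤ C) :
    (γ - ρ / 2 * γ ^ 2) * ∑ t ∈ Finset.Icc 1 T, ‖g (W t)‖ ^ 2 ≤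
      f (W 1) - fstar + C * T * (γ - ρ * γ ^ 2) * ε + ρ / 2 * C * T * γ ^ 2 := by
  have hρ : 0 < ρ := one_div_pos.mp (hγpos.trans_le hγle)
  have hγ : 0 ≤ γ - ρ * γ ^ 2 := by
    have : ρ * γ ≤ 1 := (le_div_iff₀' hρ).mp hγle
    nlinarith
  have hstep : ∀ t ∈ Finset.Icc 1 T, (γ - ρ / 2 * γ ^ 2) * ‖g (W t)‖ ^ 2 ≤
      f (W t) - f (W (t + 1)) + (C * ε * (γ - ρ * γ ^ 2) + ρ / 2 * C * γ ^ 2) := by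
    intro t ht
    obtain ⟨h1, h2⟩ := Finset.mem_Icc.mp ht
    rw [hupd t h1 h2, ← add_assoc]
    exact mul_norm_sq_le_of_descent_step (fun y ↦ le_of_abs_le (hsmooth _ y)) hρ.le hγ
      (neg_le_of_abs_le (hip t h1 h2)) (hδ t h1 h2)
  have hsum := sum_Icc_le_of_le_sub_succ_add hstep (hfstar (W (T + 1)))
  rw [Finset.mul_sum]
  linarith

/-- Summed descent inequality for `T` steps of gradient descent with
approximate gradients `g (W t) + δ t` on a ρ-smooth function `f` bounded below
by `f_*`: if `0 < γ ≤ 1/ρ`, `|⟪g (W t), δ t⟫| ≤ C ε` and `‖δ t‖² ≤ C` for all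
`1 ≤ t ≤ T`, then
`(γ - (ρ/2) γ²) ∑_{t=1}^T ‖g (W t)‖² ≤ f (W 1) - f_* + C T (γ - ρ γ²) ε + (ρ/2) C T γ²`. -/
theorem smooth_descent_sum {E : Type*} [NormedAddCommGroup E]
    [InnerProductSpace ℝ E] {ρ : ℝ} (hρ : 0 < ρ) (f : E → ℝ) (g : E → E)
    (hdiff : ∀ x : E, HasFDerivAt f (innerSL ℝ (g x)) x)
    (hsmooth : ∀ x y : E, |f y - f x - ⟪g x, y - x⟫| ≤ ρ / 2 * ‖y - x‖ ^ 2)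
    (fstar : ℝ) (hfstar : ∀ x : E, fstar ≤ f x)
    {C ε : ℝ} (hC : 0 ≤ C) (hε : 0 ≤ ε)
    (T : ℕ) (hT : 0 < T) {γ : ℝ} (hγpos : 0 < γ) (hγle : γ ≤ 1 / ρ)
    (W : ℕ → E) (δ : ℕ → E)
    (hupd : ∀ t, 1 ≤ t → t ≤ T → W (t + 1) = W t - γ • (g (W t) + δ t))
    (hip : ∀ t, 1 ≤ t → t ≤ T → |⟪g (W t), δ t⟫| ≤ C * ε)
    (hδ : ∀ t, 1 ≤ t → t ≤ T → ‖δ t‖ ^ 2 ≤ C) :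
    (γ - ρ / 2 * γ ^ 2) * ∑ t ∈ Finset.Icc 1 T, ‖g (W t)‖ ^ 2 ≤
      f (W 1) - fstar + C * T * (γ - ρ * γ ^ 2) * ε + ρ / 2 * C * T * γ ^ 2 :=
  smooth_descent_sum_general f g hsmooth fstar hfstar T hγpos hγle W δ hupd hip hδ
end

section
/- Let E be a real inner product space, ρ > 0, and let f : E → ℝ be differentiable and ρ-smooth. Let f_* ∈ ℝ satisfy f_* ≤ f(x) for all x ∈ E. Let C ≥ 0, ε ≥ 0, let T ≥ 1 be an integer, set γ = 1/(ρ·√T), and let iterates W₁, …, W_{T+1} ∈ E and errors δ₁, …, δ_T ∈ E satisfy W_{t+1} = W_t − γ·(∇f(W_t) + δ_t), |⟪∇f(W_t), δ_t⟫| ≤ C·ε, and ‖δ_t‖² ≤ C for every 1 ≤ t ≤ T. Then (1/T)·Σ_{t=1}^{T} ‖∇f(W_t)‖² ≤ (2ρ·(f(W₁) − f_*) + C)/√T + 2C·(1 − 1/√T)·ε. -/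
open scoped RealInnerProductSpace

/-- Convergence rate of `T` steps of gradient descent with approximate
gradients `g (W t) + δ t` on a ρ-smooth function `f` bounded below by `f_*`,
with step size `γ = 1/(ρ √T)`: the average squared gradient norm satisfies
`(1/T) ∑_{t=1}^T ‖g (W t)‖² ≤ (2ρ (f (W 1) - f_*) + C)/√T + 2C (1 - 1/√T) ε`. -/
theorem smooth_descent_convergence {E : Type*} [NormedAddCommGroup E]
    [InnerProductSpace ℝ E] {ρ : ℝ} (hρ : 0 < ρ) (f : E → ℝ) (g : E → E)
    (hdiff : ∀ x : E, HasFDerivAt f (innerSL ℝ (g x)) x)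
    (hsmooth : ∀ x y : E, |f y - f x - ⟪g x, y - x⟫| ≤ ρ / 2 * ‖y - x‖ ^ 2)
    (fstar : ℝ) (hfstar : ∀ x : E, fstar ≤ f x)
    {C ε : ℝ} (hC : 0 ≤ C) (hε : 0 ≤ ε)
    (T : ℕ) (hT : 1 ≤ T) {γ : ℝ} (hγ : γ = 1 / (ρ * Real.sqrt T))
    (W : ℕ → E) (δ : ℕ → E)
    (hupd : ∀ t, 1 ≤ t → t ≤ T → W (t + 1) = W t - γ • (g (W t) + δ t))
    (hip : ∀ t, 1 ≤ t → t ≤ T → |⟪g (W t), δ t⟫| ≤ C * ε)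
    (hδ : ∀ t, 1 ≤ t → t ≤ T → ‖δ t‖ ^ 2 ≤ C) :
    (1 / T : ℝ) * ∑ t ∈ Finset.Icc 1 T, ‖g (W t)‖ ^ 2 ≤
      (2 * ρ * (f (W 1) - fstar) + C) / Real.sqrt T
        + 2 * C * (1 - 1 / Real.sqrt T) * ε := by
  set s := Real.sqrt T with hsdef
  have hT0 : (0:ℝ) < T := by exact_mod_cast hT
  have hT1 : (1:ℝ) ≤ T := by exact_mod_cast hT
  have hs1 : 1 ≤ s := by
    rw [hsdef, show (1:ℝ) = Real.sqrt 1 from (Real.sqrt_one).symm]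
    exact Real.sqrt_le_sqrt hT1
  have hs0 : 0 < s := lt_of_lt_of_le one_pos hs1
  have hs2 : s ^ 2 = T := Real.sq_sqrt hT0.le
  set u := 1 / s with hudef
  have hu : u * s = 1 := by rw [hudef]; field_simp
  have hu0 : 0 < u := by rw [hudef]; positivity
  have hu1 : u ≤ 1 := by
    rw [hudef]; exact (div_le_one hs0).mpr hs1
  have hγ0 : 0 < γ := by rw [hγ]; positivity
  have hργ : ρ * γ = u := by rw [hγ, hudef]; field_simp
  have hsTu : (T:ℝ) * u = s := by
    rw [← hs2, hudef]; field_simp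
  -- per-step inequality
  have key : ∀ t, 1 ≤ t → t ≤ T →
      ‖g (W t)‖ ^ 2 ≤ 2 * ρ * s * (f (W t) - f (W (t+1))) + 2 * (1 - u) * (C * ε) + u * C := by
    intro t h1 h2
    have hy : W (t + 1) - W t = -(γ • (g (W t) + δ t)) := by
      rw [hupd t h1 h2]; abel
    have hinner : ⟪g (W t), W (t+1) - W t⟫ = -(γ * (‖g (W t)‖^2 + ⟪g (W t), δ t⟫)) := by
      rw [hy, inner_neg_right, real_inner_smul_right, inner_add_right,
        real_inner_self_eq_norm_sq]
    have hnorm : ‖W (t+1) - W t‖^2 = γ^2 * (‖g (W t)‖^2 + 2*⟪g (W t), δ t⟫ + ‖δ t‖^2) := by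
      rw [hy, norm_neg, norm_smul, Real.norm_eq_abs, mul_pow, sq_abs, norm_add_sq_real]
    have hsm := (abs_le.mp (hsmooth (W t) (W (t+1)))).2
    rw [hinner, hnorm] at hsm
    obtain ⟨hip2, hip1⟩ := abs_le.mp (hip t h1 h2)
    have hδ' := hδ t h1 h2
    have hg2 : (0:ℝ) ≤ ‖g (W t)‖ ^ 2 := sq_nonneg _
    have hρs : ρ * γ * s = 1 := by rw [hργ]; exact hu
    have hipn : (0:ℝ) ≤ ⟪g (W t), δ t⟫ + C * ε := by linarith
    have h := mul_le_mul_of_nonneg_left hsm (by positivity : (0:ℝ) ≤ 2 * ρ * s)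
    have heq1 : 2 * ρ * s * (f (W (t+1)) - f (W t) - -(γ * (‖g (W t)‖^2 + ⟪g (W t), δ t⟫)))
        = 2 * ρ * s * (f (W (t+1)) - f (W t)) + 2 * (‖g (W t)‖^2 + ⟪g (W t), δ t⟫) := by
      linear_combination (2 * (‖g (W t)‖^2 + ⟪g (W t), δ t⟫)) * hρs
    have heq2 : 2 * ρ * s * (ρ / 2 * (γ^2 * (‖g (W t)‖^2 + 2*⟪g (W t), δ t⟫ + ‖δ t‖^2)))
        = u * (‖g (W t)‖^2 + 2*⟪g (W t), δ t⟫ + ‖δ t‖^2) := by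
      linear_combination (‖g (W t)‖^2 + 2*⟪g (W t), δ t⟫ + ‖δ t‖^2) * (ρ * γ) * hρs
        + (‖g (W t)‖^2 + 2*⟪g (W t), δ t⟫ + ‖δ t‖^2) * hργ
    rw [heq1, heq2] at h
    nlinarith [h, mul_nonneg (sub_nonneg.mpr hu1) hipn,
      mul_nonneg (sub_nonneg.mpr hu1) hg2,
      mul_nonneg hu0.le (sub_nonneg.mpr hδ')]
  -- sum it
  have hsum : ∑ t ∈ Finset.Icc 1 T, ‖g (W t)‖ ^ 2 ≤
      2 * ρ * s * (f (W 1) - f (W (T+1))) + T * (2 * (1 - u) * (C * ε) + u * C) := by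
    have h1 : ∑ t ∈ Finset.Icc 1 T, ‖g (W t)‖ ^ 2 ≤
        ∑ t ∈ Finset.Icc 1 T, (2 * ρ * s * (f (W t) - f (W (t+1))) + (2 * (1 - u) * (C * ε) + u * C)) := by
      apply Finset.sum_le_sum
      intro t ht
      obtain ⟨h1, h2⟩ := Finset.mem_Icc.mp ht
      linarith [key t h1 h2]
    rw [Finset.sum_add_distrib, Finset.sum_const, Nat.card_Icc] at h1
    have htel : ∑ t ∈ Finset.Icc 1 T, (f (W t) - f (W (t+1))) = f (W 1) - f (W (T+1)) := by
      rw [show Finset.Icc 1 T = Finset.Ico 1 (T+1) from by rw [Finset.Ico_add_one_right_eq_Icc],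
        Finset.sum_Ico_eq_sum_range]
      simp only [Nat.add_sub_cancel]
      have := Finset.sum_range_sub' (fun i => f (W (1 + i))) T
      simpa [add_assoc, add_comm, add_left_comm] using this
    calc ∑ t ∈ Finset.Icc 1 T, ‖g (W t)‖ ^ 2 ≤ _ := h1
      _ = 2 * ρ * s * (f (W 1) - f (W (T+1))) + T * (2 * (1 - u) * (C * ε) + u * C) := by
          rw [← Finset.mul_sum, htel]
          simp [Nat.add_sub_cancel]
          ring
  have hfin : f (W (T+1)) ≥ fstar := hfstar _
  have hΔ : 2 * ρ * s * (f (W 1) - f (W (T+1))) ≤ 2 * ρ * s * (f (W 1) - fstar) := by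
    apply mul_le_mul_of_nonneg_left (by linarith) (by positivity)
  rw [div_eq_mul_one_div _ s, ← hudef, show (1:ℝ)/T * ∑ t ∈ Finset.Icc 1 T, ‖g (W t)‖ ^ 2
      = (∑ t ∈ Finset.Icc 1 T, ‖g (W t)‖ ^ 2) / T from by ring, div_le_iff₀ hT0]
  have h2 : ∑ t ∈ Finset.Icc 1 T, ‖g (W t)‖ ^ 2 ≤
      2 * ρ * ((T:ℝ) * u) * (f (W 1) - fstar) + T * (2 * (1 - u) * (C * ε) + u * C) := by
    rw [hsTu]; linarith
  calc ∑ t ∈ Finset.Icc 1 T, ‖g (W t)‖ ^ 2 ≤ _ := h2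
    _ = ((2 * ρ * (f (W 1) - fstar) + C) * u + 2 * C * (1 - u) * ε) * T := by ring
end
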